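/- arXiv:2112.07473 — 5 statements merged into one kernel-verified Lean document; each statement's English description precedes it below -/
import Mathlib

section
/- If A is a worm all of whose modalities are strictly greater than α (i.e. A ∈ 𝕎_{α+1}), then GLP_Λ derives A ∧ ⟨α⟩B ↔ A⟨α⟩B for any worm B, where AC denotes the concatenation of worms. -/
/-- Formulas of the polymodal provability logic `GLP_Λ`, with modalities
indexed by ordinals.  Other connectives are defined from `⊥`, `→` and `[α]`. -/
inductive GLPFormula : Type 1 where
  | bot : GLPFormula
  | impl : GLPFormula → GLPFormula → GLPFormula
  | box : Ordinal → GLPFormula → GLPFormula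

namespace GLPFormula

def neg (φ : GLPFormula) : GLPFormula := impl φ bot
def top : GLPFormula := neg bot
def conj (φ ψ : GLPFormula) : GLPFormula := neg (impl φ (neg ψ))
def iff' (φ ψ : GLPFormula) : GLPFormula := conj (impl φ ψ) (impl ψ φ)
def dia (α : Ordinal) (φ : GLPFormula) : GLPFormula := neg (box α (neg φ))

end GLPFormula

open GLPFormula

/-- Hilbert-style provability in `GLP_Λ`: classical tautologies, `GL` for each
modality `[α]` with `α < Λ`, monotonicity `[β]φ → [α]φ` and negative
introspection `⟨β⟩φ → [α]⟨β⟩φ` for `β < α < Λ`. -/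
inductive GLP (Λ : Ordinal) : GLPFormula → Prop where
  | ax1 (φ ψ) : GLP Λ (impl φ (impl ψ φ))
  | ax2 (φ ψ χ) : GLP Λ (impl (impl φ (impl ψ χ)) (impl (impl φ ψ) (impl φ χ)))
  | ax3 (φ ψ) : GLP Λ (impl (impl (neg φ) (neg ψ)) (impl ψ φ))
  | dist {α} (h : α < Λ) (φ ψ) :
      GLP Λ (impl (box α (impl φ ψ)) (impl (box α φ) (box α ψ)))
  | lob {α} (h : α < Λ) (φ) : GLP Λ (impl (box α (impl (box α φ) φ)) (box α φ))
  | mono {α β} (hβα : β < α) (hα : α < Λ) (φ) : GLP Λ (impl (box β φ) (box α φ))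
  | introspec {α β} (hβα : β < α) (hα : α < Λ) (φ) :
      GLP Λ (impl (dia β φ) (box α (dia β φ)))
  | mp {φ ψ} : GLP Λ (impl φ ψ) → GLP Λ φ → GLP Λ ψ
  | nec {α} (h : α < Λ) {φ} : GLP Λ φ → GLP Λ (box α φ)

/-- Worms are iterated diamonds over `⊤`; we identify a worm with its list of
ordinal modalities (leftmost/outermost first). -/
def wormFormula : List Ordinal → GLPFormula
  | [] => GLPFormula.top
  | α :: A => dia α (wormFormula A)

/-! ### Auxiliary machinery -/

/-- Propositional derivability from hypotheses, over `GLP Λ` theorems. -/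
inductive Prf (Λ : Ordinal) (Γ : List GLPFormula) : GLPFormula → Prop where
  | hyp {φ} : φ ∈ Γ → Prf Λ Γ φ
  | thm {φ} : GLP Λ φ → Prf Λ Γ φ
  | mp {φ ψ} : Prf Λ Γ (impl φ ψ) → Prf Λ Γ φ → Prf Λ Γ ψ

theorem glp_id (Λ : Ordinal) (φ : GLPFormula) : GLP Λ (impl φ φ) :=
  .mp (.mp (.ax2 φ (impl φ φ) φ) (.ax1 φ (impl φ φ))) (.ax1 φ φ)

theorem Prf.ded {Λ Γ φ ψ} (h : Prf Λ (φ :: Γ) ψ) : Prf Λ Γ (impl φ ψ) := by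
  induction h with
  | hyp hm =>
    rcases List.mem_cons.1 hm with rfl | hm
    · exact .thm (glp_id Λ _)
    · exact .mp (.thm (.ax1 _ _)) (.hyp hm)
  | thm h => exact .mp (.thm (.ax1 _ _)) (.thm h)
  | mp _ _ ih1 ih2 => exact .mp (.mp (.thm (.ax2 _ _ _)) ih1) ih2

theorem Prf.toGLP {Λ φ} (h : Prf Λ [] φ) : GLP Λ φ := by
  induction h with
  | hyp hm => simp at hm
  | thm h => exact h
  | mp _ _ ih1 ih2 => exact ih1.mp ih2

theorem Prf.hyp0 {Λ Γ φ} : Prf Λ (φ :: Γ) φ := .hyp (by simp)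
theorem Prf.hyp1 {Λ Γ φ ψ} : Prf Λ (ψ :: φ :: Γ) φ := .hyp (by simp)
theorem Prf.hyp2 {Λ Γ φ ψ χ} : Prf Λ (χ :: ψ :: φ :: Γ) φ := .hyp (by simp)
theorem Prf.hyp3 {Λ Γ φ ψ χ ρ} : Prf Λ (ρ :: χ :: ψ :: φ :: Γ) φ := .hyp (by simp)

theorem GLP.trans {Λ φ ψ χ} (h1 : GLP Λ (impl φ ψ)) (h2 : GLP Λ (impl ψ χ)) :
    GLP Λ (impl φ χ) :=
  .mp (.mp (.ax2 φ ψ χ) (.mp (.ax1 (impl ψ χ) φ) h2)) h1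

theorem glp_top (Λ : Ordinal) : GLP Λ top := glp_id Λ bot

theorem glp_dni (Λ φ) : GLP Λ (impl φ (neg (neg φ))) :=
  Prf.toGLP (Prf.ded (Prf.ded (.mp Prf.hyp0 Prf.hyp1)))

theorem glp_dne (Λ φ) : GLP Λ (impl (neg (neg φ)) φ) :=
  .mp (.ax3 φ (neg (neg φ))) (glp_dni Λ (neg φ))

theorem glp_contrapose (Λ φ ψ) :
    GLP Λ (impl (impl φ ψ) (impl (neg ψ) (neg φ))) :=
  Prf.toGLP (Prf.ded (Prf.ded (Prf.ded
    (.mp Prf.hyp1 (.mp Prf.hyp2 Prf.hyp0)))))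

theorem glp_conjIntro (Λ φ ψ) : GLP Λ (impl φ (impl ψ (conj φ ψ))) :=
  Prf.toGLP (Prf.ded (Prf.ded (Prf.ded
    (.mp (.mp Prf.hyp0 Prf.hyp2) Prf.hyp1))))

theorem glp_conjE1 (Λ φ ψ) : GLP Λ (impl (conj φ ψ) φ) :=
  Prf.toGLP (Prf.ded (.mp (.thm (glp_dne Λ φ))
    (Prf.ded (.mp Prf.hyp1
      (Prf.ded (Prf.ded (.mp Prf.hyp2 Prf.hyp1)))))))

theorem glp_conjE2 (Λ φ ψ) : GLP Λ (impl (conj φ ψ) ψ) :=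
  Prf.toGLP (Prf.ded (.mp (.thm (glp_dne Λ ψ))
    (Prf.ded (.mp Prf.hyp1 (Prf.ded Prf.hyp1)))))

theorem glp_iffIntro {Λ φ ψ} (h1 : GLP Λ (impl φ ψ)) (h2 : GLP Λ (impl ψ φ)) :
    GLP Λ (iff' φ ψ) :=
  .mp (.mp (glp_conjIntro Λ _ _) h1) h2

theorem glp_boxMono {Λ α φ ψ} (hα : α < Λ) (h : GLP Λ (impl φ ψ)) :
    GLP Λ (impl (box α φ) (box α ψ)) :=
  .mp (.dist hα φ ψ) (.nec hα h)

theorem glp_diaMono {Λ α φ ψ} (hα : α < Λ) (h : GLP Λ (impl φ ψ)) :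
    GLP Λ (impl (dia α φ) (dia α ψ)) :=
  .mp (glp_contrapose Λ _ _)
    (glp_boxMono hα (.mp (glp_contrapose Λ _ _) h))

/-- `◇φ → □ψ → ◇(φ ∧ ψ)`. -/
theorem glp_diaBoxConj {Λ α} (hα : α < Λ) (φ ψ) :
    GLP Λ (impl (dia α φ) (impl (box α ψ) (dia α (conj φ ψ)))) := by
  have t0 : GLP Λ (impl ψ (impl (neg (conj φ ψ)) (neg φ))) :=
    Prf.toGLP (Prf.ded (Prf.ded (Prf.ded
      (.mp Prf.hyp1 (.mp (.mp (.thm (glp_conjIntro Λ φ ψ)) Prf.hyp0) Prf.hyp2)))))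
  have t1 : GLP Λ (impl (box α ψ) (impl (box α (neg (conj φ ψ))) (box α (neg φ)))) :=
    (glp_boxMono hα t0).trans (.dist hα _ _)
  exact Prf.toGLP (Prf.ded (Prf.ded (Prf.ded
    (.mp Prf.hyp2 (.mp (.mp (.thm t1) Prf.hyp1) Prf.hyp0)))))

/-- Transitivity `□φ → □□φ`, derived from Löb's axiom. -/
theorem glp_box4 {Λ α} (hα : α < Λ) (φ) :
    GLP Λ (impl (box α φ) (box α (box α φ))) := by
  set c := conj φ (box α φ) with hc
  have t1 : GLP Λ (impl φ (impl (box α c) c)) :=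
    Prf.toGLP (Prf.ded (Prf.ded
      (.mp (.mp (.thm (glp_conjIntro Λ φ (box α φ))) Prf.hyp1)
        (.mp (.thm (glp_boxMono hα (glp_conjE1 Λ φ (box α φ)))) Prf.hyp0))))
  exact ((glp_boxMono hα t1).trans (.lob hα c)).trans
    (glp_boxMono hα (glp_conjE2 Λ φ (box α φ)))

/-- `◇◇φ → ◇φ`. -/
theorem glp_diaIdem {Λ α} (hα : α < Λ) (φ) :
    GLP Λ (impl (dia α (dia α φ)) (dia α φ)) :=
  .mp (glp_contrapose Λ _ _)
    ((glp_box4 hα (neg φ)).trans (glp_boxMono hα (glp_dni Λ (box α (neg φ)))))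

/-- `◇_γ φ → ◇_β φ` when `β < γ`. -/
theorem glp_diaIdx {Λ β γ} (hβγ : β < γ) (hγ : γ < Λ) (φ) :
    GLP Λ (impl (dia γ φ) (dia β φ)) :=
  .mp (glp_contrapose Λ _ _) (.mono hβγ hγ (neg φ))

/-- If `A` is a worm all of whose modalities are `> α`
(i.e. `A ∈ 𝕎_{α+1}`), then `GLP_Λ` derives `A ∧ ⟨α⟩B ↔ A⟨α⟩B` for any worm
`B`, where concatenation of worms is list append. -/
theorem glp_worm_conj_concat (Λ α : Ordinal) (hα : α < Λ) (A B : List Ordinal)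
    (hA : ∀ γ ∈ A, α < γ ∧ γ < Λ) (hB : ∀ γ ∈ B, γ < Λ) :
    GLP Λ (iff' (conj (wormFormula A) (dia α (wormFormula B)))
      (wormFormula (A ++ α :: B))) := by
  induction A with
  | nil =>
    refine glp_iffIntro (glp_conjE2 Λ _ _) ?_
    exact Prf.toGLP (Prf.ded
      (.mp (.mp (.thm (glp_conjIntro Λ _ _)) (.thm (glp_top Λ))) Prf.hyp0))
  | cons γ A ih =>
    obtain ⟨hαγ, hγ⟩ := hA γ (by simp)
    have ih' := ih (fun δ hδ => hA δ (by simp [hδ]))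
    set X := wormFormula A
    set D := dia α (wormFormula B)
    set C := wormFormula (A ++ α :: B)
    have fwd : GLP Λ (impl (conj X D) C) := .mp (glp_conjE1 Λ _ _) ih'
    have bwd : GLP Λ (impl C (conj X D)) := .mp (glp_conjE2 Λ _ _) ih'
    have goal_fwd : GLP Λ (impl (conj (dia γ X) D) (dia γ C)) := by
      refine Prf.toGLP (Prf.ded ?_)
      have hX : Prf Λ [conj (dia γ X) D] (dia γ X) :=
        .mp (.thm (glp_conjE1 Λ _ _)) Prf.hyp0
      have hD : Prf Λ [conj (dia γ X) D] D :=
        .mp (.thm (glp_conjE2 Λ _ _)) Prf.hyp0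
      have hBoxD : Prf Λ [conj (dia γ X) D] (box γ D) :=
        .mp (.thm (.introspec hαγ hγ (wormFormula B))) hD
      have hXD : Prf Λ [conj (dia γ X) D] (dia γ (conj X D)) :=
        .mp (.mp (.thm (glp_diaBoxConj hγ X D)) hX) hBoxD
      exact .mp (.thm (glp_diaMono hγ fwd)) hXD
    have goal_bwd : GLP Λ (impl (dia γ C) (conj (dia γ X) D)) := by
      refine Prf.toGLP (Prf.ded ?_)
      have h1 : Prf Λ [dia γ C] (dia γ (conj X D)) :=
        .mp (.thm (glp_diaMono hγ bwd)) Prf.hyp0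
      have hX : Prf Λ [dia γ C] (dia γ X) :=
        .mp (.thm (glp_diaMono hγ (glp_conjE1 Λ X D))) h1
      have hD : Prf Λ [dia γ C] D := by
        have h2 : Prf Λ [dia γ C] (dia γ D) :=
          .mp (.thm (glp_diaMono hγ (glp_conjE2 Λ X D))) h1
        have h3 : Prf Λ [dia γ C] (dia α D) :=
          .mp (.thm (glp_diaIdx hαγ hγ D)) h2
        exact .mp (.thm (glp_diaIdem hα (wormFormula B))) h3
      exact .mp (.mp (.thm (glp_conjIntro Λ _ _)) hX) hD
    exact glp_iffIntro goal_fwd goal_bwd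
end

section
/- For every worm B with all modalities ≤ α and length |B| ≤ n, GLP_Λ derives ⟨α⟩ⁿ⊤ → B. -/
open GLPFormula

/-! Induction on `B`: one `⟨α⟩` of `⟨α⟩ⁿ⊤` is peeled off by monotonicity of `⟨α⟩` under provable
implication, and its index is then lowered to the first modality `γ ≤ α` of `B` by contraposing
the monotonicity axiom `[γ]φ → [α]φ`. -/

namespace GLP

variable {Λ : Ordinal}

theorem impl_refl (φ : GLPFormula) : GLP Λ (impl φ φ) :=
  mp (mp (ax2 φ (impl φ φ) φ) (ax1 φ (impl φ φ))) (ax1 φ φ)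

theorem impl_trans {φ ψ χ : GLPFormula} (h₁ : GLP Λ (impl φ ψ)) (h₂ : GLP Λ (impl ψ χ)) :
    GLP Λ (impl φ χ) :=
  mp (mp (ax2 φ ψ χ) (mp (ax1 (impl ψ χ) φ) h₂)) h₁

theorem impl_top (φ : GLPFormula) : GLP Λ (impl φ top) :=
  mp (ax1 top φ) (impl_refl bot)

theorem impl_precomp {φ ψ : GLPFormula} (h : GLP Λ (impl φ ψ)) (χ : GLPFormula) :
    GLP Λ (impl (impl ψ χ) (impl φ χ)) :=
  have compose : GLP Λ (impl (impl ψ χ) (impl (impl φ ψ) (impl φ χ))) :=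
    impl_trans (ax1 (impl ψ χ) φ) (ax2 φ ψ χ)
  mp (mp (ax2 _ _ _) compose) (mp (ax1 _ _) h)

theorem contrapose {φ ψ : GLPFormula} (h : GLP Λ (impl φ ψ)) : GLP Λ (impl (neg ψ) (neg φ)) :=
  impl_precomp h bot

theorem box_mono {α : Ordinal} (hα : α < Λ) {φ ψ : GLPFormula} (h : GLP Λ (impl φ ψ)) :
    GLP Λ (impl (box α φ) (box α ψ)) :=
  mp (dist hα φ ψ) (nec hα h)

theorem dia_mono {α : Ordinal} (hα : α < Λ) {φ ψ : GLPFormula} (h : GLP Λ (impl φ ψ)) :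
    GLP Λ (impl (dia α φ) (dia α ψ)) :=
  contrapose (box_mono hα (contrapose h))

theorem dia_anti {γ α : Ordinal} (hγα : γ ≤ α) (hα : α < Λ) (φ : GLPFormula) :
    GLP Λ (impl (dia α φ) (dia γ φ)) := by
  rcases hγα.lt_or_eq with hlt | rfl
  · exact contrapose (mono hlt hα (neg φ))
  · exact impl_refl _

end GLP

/-- For every worm `B` with all modalities `≤ α` and length
`|B| ≤ n`, `GLP_Λ` derives `⟨α⟩ⁿ⊤ → B`. -/
theorem glp_iterated_dia_to_small_worm (Λ α : Ordinal) (hα : α < Λ) (n : ℕ)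
    (B : List Ordinal) (hB : ∀ γ ∈ B, γ ≤ α) (hlen : B.length ≤ n) :
    GLP Λ (impl (wormFormula (List.replicate n α)) (wormFormula B)) := by
  induction B generalizing n with
  | nil => exact GLP.impl_top _
  | cons γ B ih =>
    cases n with
    | zero => simp at hlen
    | succ m =>
      have tail : GLP Λ (impl (wormFormula (List.replicate m α)) (wormFormula B)) :=
        ih m (fun δ hδ => hB δ (List.mem_cons_of_mem γ hδ)) (by simpa using hlen)
      exact GLP.impl_trans (GLP.dia_mono hα tail) (GLP.dia_anti (hB γ List.mem_cons_self) hα _)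
end

section
/- If A = ⟨α+1⟩B is a worm, then for every k ∈ ℕ, GLP_Λ derives Q^α_k(B) ↔ (⟨α⟩h_{α+1}(B))^{k+1} r_{α+1}(B), where exponentiation denotes (k+1)-fold concatenation. -/
open GLPFormula

/-- The formulas `Q^α_k(φ)`: `Q^α_0(φ) = ⟨α⟩φ`, `Q^α_{k+1}(φ) = ⟨α⟩(φ ∧ Q^α_k(φ))`. -/
def Q (α : Ordinal) : ℕ → GLPFormula → GLPFormula
  | 0, φ => dia α φ
  | k + 1, φ => dia α (conj φ (Q α k φ))

/-- The `α`-head of a worm: maximal initial segment of modalities `≥ α`. -/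
noncomputable def headW (α : Ordinal) : List Ordinal → List Ordinal
  | [] => []
  | β :: A => if β < α then [] else β :: headW α A

/-- The `α`-remainder of a worm: what is left after removing the `α`-head. -/
noncomputable def remW (α : Ordinal) : List Ordinal → List Ordinal
  | [] => []
  | β :: A => if β < α then β :: A else remW α A

namespace GLPAux
open GLPFormula GLP

variable {Λ : Ordinal}

theorem idI (φ) : GLP Λ (impl φ φ) :=
  mp (mp (ax2 φ (impl φ φ) φ) (ax1 φ (impl φ φ))) (ax1 φ φ)

theorem hs {φ ψ χ} (h1 : GLP Λ (impl φ ψ)) (h2 : GLP Λ (impl ψ χ)) :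
    GLP Λ (impl φ χ) :=
  mp (mp (ax2 φ ψ χ) (mp (ax1 (impl ψ χ) φ) h2)) h1

theorem flipR {φ ψ χ} (h : GLP Λ (impl φ (impl ψ χ))) : GLP Λ (impl ψ (impl φ χ)) :=
  hs (ax1 ψ φ) (mp (ax2 φ ψ χ) h)

theorem contraction {φ ψ} (h : GLP Λ (impl φ (impl φ ψ))) : GLP Λ (impl φ ψ) :=
  mp (mp (ax2 φ φ ψ) h) (idI φ)

theorem dne (φ) : GLP Λ (impl (neg (neg φ)) φ) :=
  contraction (hs (ax1 (neg (neg φ)) (neg (neg (neg (neg φ)))))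
    (hs (ax3 (neg (neg (neg φ))) (neg φ)) (ax3 φ (neg (neg φ)))))

theorem dni (φ) : GLP Λ (impl φ (neg (neg φ))) :=
  mp (ax3 (neg (neg φ)) φ) (dne (neg φ))

theorem Bthm (a b c) : GLP Λ (impl (impl b c) (impl (impl a b) (impl a c))) :=
  hs (ax1 (impl b c) a) (ax2 a b c)

theorem Bthm' (a b c) : GLP Λ (impl (impl a b) (impl (impl b c) (impl a c))) :=
  flipR (Bthm a b c)

theorem cp1 (u v) : GLP Λ (impl (impl u (neg v)) (impl v (neg u))) :=
  hs (mp (Bthm' (neg (neg u)) u (neg v)) (dne u)) (ax3 (neg u) v)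

theorem cp2 (a b) : GLP Λ (impl (impl a b) (impl (neg b) (neg a))) :=
  hs (mp (Bthm a b (neg (neg b))) (dni b)) (cp1 a (neg b))

theorem efq (φ) : GLP Λ (impl bot φ) :=
  hs (ax1 bot (neg φ)) (dne φ)

theorem topI : GLP Λ top := idI bot

theorem imp_top (φ) : GLP Λ (impl φ top) := mp (ax1 top φ) topI

theorem and_left (φ ψ) : GLP Λ (impl (conj φ ψ) φ) :=
  hs (mp (cp2 (neg φ) (impl φ (neg ψ)))
      (mp (Bthm φ bot (neg ψ)) (efq (neg ψ)))) (dne φ)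

theorem and_right (φ ψ) : GLP Λ (impl (conj φ ψ) ψ) :=
  hs (mp (cp2 (neg ψ) (impl φ (neg ψ))) (ax1 (neg ψ) φ)) (dne ψ)

theorem assertion (a c) : GLP Λ (impl a (impl (impl a c) c)) :=
  flipR (idI (impl a c))

theorem and_intro_thm (φ ψ) : GLP Λ (impl φ (impl ψ (conj φ ψ))) :=
  hs (assertion φ (neg ψ)) (cp1 (impl φ (neg ψ)) ψ)

theorem andI {φ ψ} (h1 : GLP Λ φ) (h2 : GLP Λ ψ) : GLP Λ (conj φ ψ) :=
  mp (mp (and_intro_thm φ ψ) h1) h2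

theorem pairl {x a b} (h1 : GLP Λ (impl x a)) (h2 : GLP Λ (impl x b)) :
    GLP Λ (impl x (conj a b)) :=
  mp (mp (ax2 x b (conj a b)) (hs h1 (and_intro_thm a b))) h2

theorem and_import {a b c} (h : GLP Λ (impl a (impl b c))) :
    GLP Λ (impl (conj a b) c) :=
  mp (mp (ax2 (conj a b) b c) (hs (and_left a b) h)) (and_right a b)

theorem iffI {φ ψ} (h1 : GLP Λ (impl φ ψ)) (h2 : GLP Λ (impl ψ φ)) :
    GLP Λ (iff' φ ψ) := andI h1 h2

theorem iff_mp {φ ψ} (h : GLP Λ (iff' φ ψ)) : GLP Λ (impl φ ψ) :=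
  mp (and_left (impl φ ψ) (impl ψ φ)) h

theorem iff_mpr {φ ψ} (h : GLP Λ (iff' φ ψ)) : GLP Λ (impl ψ φ) :=
  mp (and_right (impl φ ψ) (impl ψ φ)) h

theorem iff_refl (φ) : GLP Λ (iff' φ φ) := iffI (idI φ) (idI φ)

theorem iff_trans {φ ψ χ} (h1 : GLP Λ (iff' φ ψ)) (h2 : GLP Λ (iff' ψ χ)) :
    GLP Λ (iff' φ χ) :=
  iffI (hs (iff_mp h1) (iff_mp h2)) (hs (iff_mpr h2) (iff_mpr h1))

theorem iff_symm {φ ψ} (h : GLP Λ (iff' φ ψ)) : GLP Λ (iff' ψ φ) :=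
  iffI (iff_mpr h) (iff_mp h)

theorem box_mono {α φ ψ} (hα : α < Λ) (h : GLP Λ (impl φ ψ)) :
    GLP Λ (impl (box α φ) (box α ψ)) :=
  mp (dist hα φ ψ) (nec hα h)

theorem dia_mono {α φ ψ} (hα : α < Λ) (h : GLP Λ (impl φ ψ)) :
    GLP Λ (impl (dia α φ) (dia α ψ)) :=
  mp (cp2 (box α (neg ψ)) (box α (neg φ))) (box_mono hα (mp (cp2 φ ψ) h))

theorem dia_congr {α φ ψ} (hα : α < Λ) (h : GLP Λ (iff' φ ψ)) :
    GLP Λ (iff' (dia α φ) (dia α ψ)) :=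
  iffI (dia_mono hα (iff_mp h)) (dia_mono hα (iff_mpr h))

theorem and_congr_right {φ ψ ψ'} (h : GLP Λ (iff' ψ ψ')) :
    GLP Λ (iff' (conj φ ψ) (conj φ ψ')) :=
  iffI (pairl (and_left φ ψ) (hs (and_right φ ψ) (iff_mp h)))
    (pairl (and_left φ ψ') (hs (and_right φ ψ') (iff_mpr h)))

theorem trans4 {α} (hα : α < Λ) (φ) : GLP Λ (impl (box α φ) (box α (box α φ))) := by
  set θ := conj φ (box α φ) with hθ
  have s1 : GLP Λ (impl φ (impl (box α θ) θ)) := by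
    have hb : GLP Λ (impl (conj φ (box α θ)) (box α φ)) :=
      hs (and_right φ (box α θ)) (box_mono hα (and_left φ (box α φ)))
    have hc : GLP Λ (impl (conj φ (box α θ)) θ) :=
      pairl (and_left φ (box α θ)) hb
    exact hs (and_intro_thm φ (box α θ)) (mp (Bthm (box α θ) (conj φ (box α θ)) θ) hc)
  have s3 : GLP Λ (impl (box α φ) (box α θ)) := hs (box_mono hα s1) (lob hα θ)
  exact hs s3 (box_mono hα (and_right φ (box α φ)))

theorem dia4 {α} (hα : α < Λ) (φ) : GLP Λ (impl (dia α (dia α φ)) (dia α φ)) :=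
  mp (cp2 (box α (neg φ)) (box α (neg (dia α φ))))
    (hs (trans4 hα (neg φ)) (box_mono hα (dni (box α (neg φ)))))

theorem dia_absorb_lt {α β} (hαβ : α < β) (hβ : β < Λ) (φ) :
    GLP Λ (impl (dia β (dia α φ)) (dia α φ)) :=
  mp (cp2 (box α (neg φ)) (box β (neg (dia α φ))))
    (hs (trans4 (lt_trans hαβ hβ) (neg φ))
      (hs (mono hαβ hβ (box α (neg φ))) (box_mono hβ (dni (box α (neg φ))))))

theorem dia_absorb_le {α β} (hαβ : α ≤ β) (hβ : β < Λ) (φ) :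
    GLP Λ (impl (dia β (dia α φ)) (dia α φ)) := by
  rcases lt_or_eq_of_le hαβ with h | h
  · exact dia_absorb_lt h hβ φ
  · subst h; exact dia4 hβ φ

theorem dia_and_box {β} (hβ : β < Λ) (φ χ) :
    GLP Λ (impl (conj (dia β φ) (box β χ)) (dia β (conj φ χ))) := by
  have p1 : GLP Λ (impl χ (impl (neg (conj φ χ)) (neg φ))) :=
    hs (flipR (and_intro_thm φ χ)) (cp2 φ (conj φ χ))
  have p2 : GLP Λ (impl (box β χ) (impl (box β (neg (conj φ χ))) (box β (neg φ)))) :=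
    hs (box_mono hβ p1) (dist hβ (neg (conj φ χ)) (neg φ))
  have p3 : GLP Λ (impl (box β χ) (impl (dia β φ) (dia β (conj φ χ)))) :=
    hs p2 (cp2 (box β (neg (conj φ χ))) (box β (neg φ)))
  exact and_import (flipR p3)

theorem keyL {α β} (hαβ : α < β) (hβ : β < Λ) (φ ψ) :
    GLP Λ (iff' (conj (dia β φ) (dia α ψ)) (dia β (conj φ (dia α ψ)))) := by
  refine iffI ?_ ?_
  · exact hs (pairl (and_left (dia β φ) (dia α ψ))
      (hs (and_right (dia β φ) (dia α ψ)) (introspec hαβ hβ ψ)))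
      (dia_and_box hβ φ (dia α ψ))
  · exact pairl (dia_mono hβ (and_left φ (dia α ψ)))
      (hs (dia_mono hβ (and_right φ (dia α ψ))) (dia_absorb_lt hαβ hβ ψ))

end GLPAux
namespace GLPAux
open GLPFormula GLP

variable {Λ : Ordinal}

/-- fold diamonds over a list, ending in `φ`. -/
def wf : List Ordinal → GLPFormula → GLPFormula
  | [], φ => φ
  | β :: l, φ => dia β (wf l φ)

theorem worm_append (l m : List Ordinal) :
    wormFormula (l ++ m) = wf l (wormFormula m) := by
  induction l with
  | nil => rfl
  | cons β l ih => simp [wormFormula, wf, ih]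

theorem wf_congr {φ ψ} (h : GLP Λ (iff' φ ψ)) :
    ∀ l : List Ordinal, (∀ γ ∈ l, γ < Λ) → GLP Λ (iff' (wf l φ) (wf l ψ))
  | [], _ => h
  | β :: l, hl =>
      dia_congr (hl β (by simp)) (wf_congr h l (fun γ hγ => hl γ (by simp [hγ])))

theorem headDist {α} (hα : α < Λ) (ψ) :
    ∀ l : List Ordinal, (∀ γ ∈ l, α < γ ∧ γ < Λ) → ∀ χ,
      GLP Λ (iff' (conj (wf l χ) (dia α ψ)) (wf l (conj χ (dia α ψ))))
  | [], _, χ => iff_refl _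
  | β :: l, hl, χ => by
      have hβ := hl β (by simp)
      refine iff_trans (keyL hβ.1 hβ.2 (wf l χ) ψ) ?_
      exact dia_congr hβ.2 (headDist hα ψ l (fun γ hγ => hl γ (by simp [hγ])) χ)

theorem wf_drop {φ} :
    ∀ l : List Ordinal,
      (∀ γ ∈ l, γ < Λ ∧ GLP Λ (impl (dia γ φ) φ)) → GLP Λ (impl (wf l φ) φ)
  | [], _ => idI φ
  | γ :: l, hl => by
      have hγ := hl γ (by simp)
      exact hs (dia_mono hγ.1 (wf_drop l (fun δ hδ => hl δ (by simp [hδ])))) hγ.2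

theorem head_append_rem (α : Ordinal) :
    ∀ l : List Ordinal, headW α l ++ remW α l = l
  | [] => rfl
  | β :: l => by
      by_cases h : β < α
      · simp [headW, remW, h]
      · simp [headW, remW, h, head_append_rem α l]

theorem mem_headW {α γ} : ∀ {l : List Ordinal}, γ ∈ headW α l → γ ∈ l ∧ α ≤ γ := by
  intro l
  induction l with
  | nil => simp [headW]
  | cons β l ih =>
      by_cases h : β < α
      · simp [headW, h]
      · simp only [headW, h, if_false, List.mem_cons]
        rintro (rfl | hγ)
        · exact ⟨Or.inl rfl, le_of_not_gt h⟩
        · exact ⟨Or.inr (ih hγ).1, (ih hγ).2⟩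

theorem remW_first {α} : ∀ {l : List Ordinal} {δ : Ordinal} {r : List Ordinal},
    remW α l = δ :: r → δ < α ∧ δ ∈ l := by
  intro l
  induction l with
  | nil => intro δ r h; simp [remW] at h
  | cons β l ih =>
      intro δ r h
      by_cases hβ : β < α
      · simp [remW, hβ] at h
        exact ⟨h.1 ▸ hβ, by simp [h.1]⟩
      · simp [remW, hβ] at h
        obtain ⟨h1, h2⟩ := ih h
        exact ⟨h1, by simp [h2]⟩

theorem mem_flatten_replicate {x : List Ordinal} {n : ℕ} {γ : Ordinal}
    (h : γ ∈ (List.replicate n x).flatten) : γ ∈ x := by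
  rw [List.mem_flatten] at h
  obtain ⟨l, hl, hγ⟩ := h
  rw [List.eq_of_mem_replicate hl] at hγ
  exact hγ

end GLPAux
open GLPAux in
/-- If `A = ⟨α+1⟩B` is a worm, then for every `k ∈ ℕ`,
`GLP_Λ` derives `Q^α_k(B) ↔ (⟨α⟩h_{α+1}(B))^{k+1} r_{α+1}(B)`, where the
exponent denotes `(k+1)`-fold concatenation. -/
theorem glp_Q_eq_head_remainder (Λ α : Ordinal) (hα : α + 1 < Λ)
    (B : List Ordinal) (hB : ∀ γ ∈ B, γ < Λ) (k : ℕ) :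
    GLP Λ (iff' (Q α k (wormFormula B))
      (wormFormula ((List.replicate (k + 1) (α :: headW (α + 1) B)).flatten ++
        remW (α + 1) B))) := by
  have hsucc : α < α + 1 := by
    rw [Ordinal.add_one_eq_succ]; exact Order.lt_succ α
  have hαΛ : α < Λ := lt_trans hsucc hα
  have hh : ∀ γ ∈ headW (α + 1) B, α < γ ∧ γ < Λ := by
    intro γ hγ
    obtain ⟨h1, h2⟩ := mem_headW hγ
    exact ⟨lt_of_lt_of_le hsucc h2, hB γ h1⟩
  have hstep : ∀ γ, α ≤ γ → γ < Λ →
      GLP Λ (impl (dia γ (wormFormula (remW (α + 1) B)))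
        (wormFormula (remW (α + 1) B))) := by
    intro γ h1 h2
    rcases hrem : remW (α + 1) B with _ | ⟨δ, r'⟩
    · simp only [wormFormula]
      exact imp_top _
    · have hδ := remW_first hrem
      have hδα : δ ≤ α := by
        have := hδ.1
        rwa [Ordinal.add_one_eq_succ, Order.lt_succ_iff] at this
      simp only [wormFormula]
      exact dia_absorb_le (le_trans hδα h1) h2 _
  have hBeq : headW (α + 1) B ++ remW (α + 1) B = B := head_append_rem _ B
  have hwB : wormFormula B = wf (headW (α + 1) B) (wormFormula (remW (α + 1) B)) := by
    conv_lhs => rw [← hBeq]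
    exact worm_append _ _
  induction k with
  | zero =>
      have e0 : (List.replicate (0 + 1) (α :: headW (α + 1) B)).flatten ++
          remW (α + 1) B = α :: B := by
        simp only [Nat.zero_add, List.replicate_one, List.flatten_cons,
          List.flatten_nil, List.append_nil, List.cons_append, hBeq]
      rw [e0]
      simp only [Q, wormFormula]
      exact iff_refl _
  | succ k ih =>
      have e1 : (List.replicate (k + 1 + 1) (α :: headW (α + 1) B)).flatten ++
          remW (α + 1) B =
          (α :: headW (α + 1) B) ++
            ((List.replicate (k + 1) (α :: headW (α + 1) B)).flatten ++
              remW (α + 1) B) := by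
        simp [List.replicate_succ, List.append_assoc]
      have e2 : (List.replicate (k + 1) (α :: headW (α + 1) B)).flatten ++
          remW (α + 1) B =
          α :: (headW (α + 1) B ++
            ((List.replicate k (α :: headW (α + 1) B)).flatten ++
              remW (α + 1) B)) := by
        simp [List.replicate_succ, List.append_assoc]
      -- abbreviations
      set Wk := (List.replicate (k + 1) (α :: headW (α + 1) B)).flatten ++
        remW (α + 1) B with hWkdef
      have hWk : wormFormula Wk = dia α (wormFormula (headW (α + 1) B ++
          ((List.replicate k (α :: headW (α + 1) B)).flatten ++ remW (α + 1) B))) := by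
        rw [e2]; simp only [wormFormula]
      have hWk' : wormFormula Wk =
          wf ((List.replicate (k + 1) (α :: headW (α + 1) B)).flatten)
            (wormFormula (remW (α + 1) B)) := by
        rw [hWkdef]; exact worm_append _ _
      have hdrop : GLP Λ (impl (wormFormula Wk) (wormFormula (remW (α + 1) B))) := by
        rw [hWk']
        refine wf_drop _ ?_
        intro γ hγ
        have hγ' : γ ∈ α :: headW (α + 1) B := mem_flatten_replicate hγ
        rcases List.mem_cons.mp hγ' with rfl | hγ''
        · exact ⟨hαΛ, hstep γ le_rfl hαΛ⟩
        · obtain ⟨hg1, hg2⟩ := hh γ hγ''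
          exact ⟨hg2, hstep γ (le_of_lt hg1) hg2⟩
      set ψ := wormFormula (headW (α + 1) B ++
        ((List.replicate k (α :: headW (α + 1) B)).flatten ++ remW (α + 1) B)) with hψ
      have g4 : GLP Λ (iff' (conj (wormFormula (remW (α + 1) B)) (dia α ψ)) (dia α ψ)) := by
        refine iffI (and_right _ _) (pairl ?_ (idI _))
        rw [← hWk]
        exact hdrop
      have g5 := wf_congr g4 (headW (α + 1) B) (fun γ hγ => (hh γ hγ).2)
      have g3 := headDist hαΛ ψ (headW (α + 1) B) hh (wormFormula (remW (α + 1) B))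
      have inner : GLP Λ (iff' (conj (wormFormula B) (Q α k (wormFormula B)))
          (wf (headW (α + 1) B) (wormFormula Wk))) := by
        refine iff_trans (and_congr_right ih) ?_
        rw [hwB, hWk]
        exact iff_trans g3 g5
      rw [e1, worm_append]
      simp only [Q, wf]
      exact dia_congr hαΛ inner
end

section
/- If A is a worm all of whose modalities are ≥ 1 and h_{⟨1⟩A}(n) is defined, then h_{⟨1⟩A}(n) > h_A^{(n)}(n), the n-fold iterate of h_A applied to n. -/
open Classical in
/-- The step-down function on worms, relative to an assignment `fs` of
fundamental sequences to limit ordinals:  `⊤⟦k⟧ = ⊤`, `(0A)⟦k⟧ = A`,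
`(⟨α+1⟩B)⟦k⟧ = (⟨α⟩h_{α+1}(B))^{k+1} r_{α+1}(B)` and `(⟨λ⟩B)⟦k⟧ = ⟨λ[k]⟩B`. -/
noncomputable def stepDown (fs : Ordinal → ℕ → Ordinal) : List Ordinal → ℕ → List Ordinal
  | [], _ => []
  | α :: B, k =>
    if α = 0 then B
    else if Order.IsSuccLimit α then fs α k :: B
    else (List.replicate (k + 1) (Ordinal.pred α :: headW α B)).flatten ++ remW α B

/-- `iterStep fs A m k = A⟦m⟧⟦m+1⟧⋯⟦m+k⟧`. -/
noncomputable def iterStep (fs : Ordinal → ℕ → Ordinal) (A : List Ordinal) (m : ℕ) : ℕ → List Ordinal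
  | 0 => stepDown fs A m
  | k + 1 => stepDown fs (iterStep fs A m k) (m + k + 1)

/-- `h_A(m)` is defined, i.e. some `A⟦m⟧⟦m+1⟧⋯⟦m+k⟧` equals `⊤`. -/
def Dies (fs : Ordinal → ℕ → Ordinal) (A : List Ordinal) (m : ℕ) : Prop :=
  ∃ k, iterStep fs A m k = []

/-- The worm-Hardy function: `h_A(m)` is the least `k` with
`A⟦m⟧⟦m+1⟧⋯⟦m+k⟧ = ⊤`. -/
noncomputable def hW (fs : Ordinal → ℕ → Ordinal) (A : List Ordinal) (m : ℕ) : ℕ :=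
  sInf {k | iterStep fs A m k = []}


/-!
Unfolding `⟨1⟩A` twice at stage `n` leaves `A 0 A 0 ⋯ 0 A` (with `n` zeros) at stage `n + 2`.
Such a worm dies block by block, `h_{W0V}(m) = h_W(m) + 2 + h_V(m + h_W(m) + 2)`, so each block
`A` is entered at a stage beyond `h_A` of the previous entry stage; since `m < h_A(m)` and `h_A` is
monotone, the entry stages outgrow the iterates of `h_A`.

Monotonicity of `h_A` is a simulation: a worm started at a later stage keeps dominating the same
worm started earlier, in the sense that the head of the earlier one sits, over the same tail,
below a modality of the later one that is equal to it or finite. Below `ω·2` the only limit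
modality is `ω`, whose fundamental sequence is the identity.
-/

namespace Worm

open Ordinal List Order

lemma headW_append_remW (α : Ordinal) : ∀ B, headW α B ++ remW α B = B
  | [] => rfl
  | β :: B => by
    by_cases h : β < α <;> simp [headW, remW, h, headW_append_remW α B]

lemma headW_eq_self {α : Ordinal} : ∀ {B : List Ordinal}, (∀ γ ∈ B, α ≤ γ) → headW α B = B
  | [], _ => rfl
  | β :: B, h => by
    simp only [forall_mem_cons] at h
    simp [headW, not_lt.2 h.1, headW_eq_self h.2]

lemma headW_append_cons_of_lt {α γ : Ordinal} (hγ : γ < α) (V : List Ordinal) :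
    ∀ B, headW α (B ++ γ :: V) = headW α B
  | [] => by simp [headW, hγ]
  | β :: B => by
    by_cases h : β < α <;> simp [headW, h, headW_append_cons_of_lt hγ V B]

lemma mem_of_mem_headW {α γ : Ordinal} {B : List Ordinal} (h : γ ∈ headW α B) : γ ∈ B := by
  rw [← headW_append_remW α B]
  exact mem_append_left _ h

lemma eq_omega0_of_isSuccLimit_of_lt_omega0_mul_two {c : Ordinal} (hl : IsSuccLimit c)
    (hc : c < ω * 2) : c = ω := by
  obtain ⟨k, rfl⟩ := isSuccPrelimit_iff_omega0_dvd.1 hl.isSuccPrelimit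
  have hk : k < 2 := (mul_lt_mul_iff_right₀ omega0_pos).1 hc
  have hk0 : k ≠ 0 := by rintro rfl; simp at hl
  rw [← one_add_one_eq_two, ← succ_eq_add_one, lt_succ_iff] at hk
  simp [le_antisymm hk (Order.one_le_iff_ne_zero.2 hk0)]

lemma omega0_lt_omega0_mul_two : ω < ω * 2 :=
  lt_mul_of_one_lt_right omega0_pos one_lt_two

variable (fs : Ordinal → ℕ → Ordinal)

@[simp] lemma stepDown_nil (k : ℕ) : stepDown fs [] k = [] := rfl

@[simp] lemma stepDown_zero_cons (B : List Ordinal) (k : ℕ) : stepDown fs (0 :: B) k = B := by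
  simp [stepDown]

/-- The last copy of the head and the remainder reassemble to `B`, so `B` survives as a
suffix of the step-down. -/
lemma stepDown_succ_cons (a : Ordinal) (B : List Ordinal) (k : ℕ) :
    stepDown fs (succ a :: B) k = (replicate k (a :: headW (succ a) B)).flatten ++ a :: B := by
  simp [stepDown, replicate_succ', headW_append_remW]

lemma stepDown_limit_cons {α : Ordinal} (hα : IsSuccLimit α) (B : List Ordinal) (k : ℕ) :
    stepDown fs (α :: B) k = fs α k :: B := by
  simp [stepDown, hα, hα.pos.ne']

lemma stepDown_append_zero_cons {W : List Ordinal} (hW : W ≠ []) (V : List Ordinal) (k : ℕ) :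
    stepDown fs (W ++ 0 :: V) k = stepDown fs W k ++ 0 :: V := by
  obtain ⟨α, W, rfl⟩ := exists_cons_of_ne_nil hW
  rcases zero_or_succ_or_isSuccLimit α with rfl | ⟨a, rfl⟩ | hα
  · simp
  · rw [cons_append, stepDown_succ_cons, stepDown_succ_cons,
      headW_append_cons_of_lt ((zero_le (a := a)).trans_lt (lt_succ a)), append_assoc,
      cons_append]
  · simp [stepDown_limit_cons fs hα]

lemma stepDown_one_cons {A : List Ordinal} (hA : ∀ γ ∈ A, 1 ≤ γ) (k : ℕ) :
    stepDown fs (1 :: A) k = (replicate (k + 1) (0 :: A)).flatten := by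
  have h1 : (1 : Ordinal) = succ 0 := by simp
  rw [h1, stepDown_succ_cons, headW_eq_self (h1 ▸ hA), replicate_succ', flatten_concat]

lemma iterStep_one_cons_one {A : List Ordinal} (hA : ∀ γ ∈ A, 1 ≤ γ) (n : ℕ) :
    iterStep fs (1 :: A) n 1 = A ++ (replicate n (0 :: A)).flatten := by
  change stepDown fs (stepDown fs (1 :: A) n) (n + 1) = _
  rw [stepDown_one_cons fs hA, replicate_succ, flatten_cons, cons_append, stepDown_zero_cons]

lemma length_le_length_stepDown_add_one (A : List Ordinal) (k : ℕ) :
    A.length ≤ (stepDown fs A k).length + 1 := by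
  rcases A with _ | ⟨α, B⟩
  · simp
  rcases zero_or_succ_or_isSuccLimit α with rfl | ⟨a, rfl⟩ | hα
  · simp
  · rw [stepDown_succ_cons]
    simp only [length_append, length_flatten, map_replicate, sum_replicate, length_cons]
    omega
  · simp [stepDown_limit_cons fs hα]

lemma lt_omega0_mul_two_of_mem_stepDown (hfs : ∀ k, fs ω k = k) {A : List Ordinal}
    (hA : ∀ γ ∈ A, γ < ω * 2) {k : ℕ} {γ : Ordinal} (hγ : γ ∈ stepDown fs A k) :
    γ < ω * 2 := by
  rcases A with _ | ⟨α, B⟩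
  · simp at hγ
  simp only [forall_mem_cons] at hA
  rcases zero_or_succ_or_isSuccLimit α with rfl | ⟨a, rfl⟩ | hα
  · exact hA.2 γ (by simpa using hγ)
  · have ha : a < ω * 2 := (lt_succ a).trans hA.1
    rw [stepDown_succ_cons] at hγ
    simp only [mem_append, mem_flatten, mem_replicate, mem_cons] at hγ
    rcases hγ with ⟨l, ⟨-, rfl⟩, hγl⟩ | rfl | hγ
    · rcases mem_cons.1 hγl with rfl | hγ
      · exact ha
      · exact hA.2 γ (mem_of_mem_headW hγ)
    · exact ha
    · exact hA.2 γ hγ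
  · rw [stepDown_limit_cons fs hα, eq_omega0_of_isSuccLimit_of_lt_omega0_mul_two hα hA.1, hfs,
      mem_cons] at hγ
    rcases hγ with rfl | hγ
    · exact (natCast_lt_omega0 k).trans omega0_lt_omega0_mul_two
    · exact hA.2 γ hγ

lemma iterStep_add (A : List Ordinal) (m s : ℕ) :
    ∀ j, iterStep fs A m (s + j + 1) = iterStep fs (iterStep fs A m s) (m + s + 1) j
  | 0 => rfl
  | j + 1 => by
    change stepDown fs (iterStep fs A m (s + j + 1)) (m + (s + j + 1) + 1) = _
    rw [iterStep_add A m s j, iterStep]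
    congr 1
    omega

lemma iterStep_succ' (A : List Ordinal) (m k : ℕ) :
    iterStep fs A m (k + 1) = iterStep fs (stepDown fs A m) (m + 1) k := by
  have h := iterStep_add fs A m 0 k
  rwa [zero_add, add_zero] at h

lemma iterStep_eq_nil_of_le {A : List Ordinal} {m k k' : ℕ} (h : iterStep fs A m k = [])
    (hk : k ≤ k') : iterStep fs A m k' = [] := by
  induction k', hk using Nat.le_induction with
  | base => exact h
  | succ k' _ ih => simp [iterStep, ih]

lemma iterStep_eq_nil_iff {A : List Ordinal} {m k : ℕ} :
    iterStep fs A m k = [] ↔ Dies fs A m ∧ hW fs A m ≤ k :=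
  ⟨fun h => ⟨⟨k, h⟩, Nat.sInf_le h⟩,
    fun ⟨hd, hk⟩ => iterStep_eq_nil_of_le fs (Nat.sInf_mem hd) hk⟩

lemma iterStep_hW {A : List Ordinal} {m : ℕ} (hd : Dies fs A m) :
    iterStep fs A m (hW fs A m) = [] :=
  Nat.sInf_mem hd

lemma iterStep_ne_nil_of_lt_hW {A : List Ordinal} {m k : ℕ} (hk : k < hW fs A m) :
    iterStep fs A m k ≠ [] :=
  Nat.notMem_of_lt_sInf hk

@[simp] lemma hW_nil (m : ℕ) : hW fs [] m = 0 :=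
  Nat.sInf_eq_zero.2 (Or.inl rfl)

lemma lt_hW_of_iterStep_ne_nil {A : List Ordinal} {m s : ℕ} (hd : Dies fs A m)
    (hs : iterStep fs A m s ≠ []) : s < hW fs A m :=
  not_le.1 fun h => hs (iterStep_eq_nil_of_le fs (iterStep_hW fs hd) h)

lemma dies_and_hW_eq_of_iterStep_eq {A B : List Ordinal} {m s : ℕ} (hd : Dies fs A m)
    (hs : iterStep fs A m s = B) (hB : B ≠ []) :
    Dies fs B (m + s + 1) ∧ hW fs A m = s + 1 + hW fs B (m + s + 1) := by
  subst hs
  obtain ⟨j, hj⟩ := Nat.exists_eq_add_of_lt (lt_hW_of_iterStep_ne_nil fs hd hB)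
  have hdB : iterStep fs (iterStep fs A m s) (m + s + 1) j = [] := by
    rw [← iterStep_add, ← hj]
    exact iterStep_hW fs hd
  have hle : hW fs A m ≤ s + 1 + hW fs (iterStep fs A m s) (m + s + 1) := by
    refine ((iterStep_eq_nil_iff fs).1 ?_).2
    rw [add_right_comm, iterStep_add]
    exact iterStep_hW fs ⟨j, hdB⟩
  have hge := ((iterStep_eq_nil_iff fs).1 hdB).2
  exact ⟨⟨j, hdB⟩, by omega⟩

lemma length_le_of_iterStep_eq_nil : ∀ {A : List Ordinal} {m k : ℕ},
    iterStep fs A m k = [] → A.length ≤ k + 1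
  | A, m, 0, h => by
    simpa [show stepDown fs A m = [] from h] using length_le_length_stepDown_add_one fs A m
  | A, m, k + 1, h => by
    rw [iterStep_succ'] at h
    have := length_le_of_iterStep_eq_nil h
    have := length_le_length_stepDown_add_one fs A m
    omega

/-- A successor modality at stage `m` spawns `m + 1` modalities, and each step removes at
most one. -/
lemma lt_of_iterStep_succ_cons_eq_nil {a : Ordinal} {T : List Ordinal} {m k : ℕ}
    (h : iterStep fs (succ a :: T) m k = []) : m < k := by
  cases k with
  | zero =>
    change stepDown fs (succ a :: T) m = [] at h
    rw [stepDown_succ_cons] at h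
    simp at h
  | succ k =>
    rw [iterStep_succ'] at h
    have hlen := length_le_of_iterStep_eq_nil fs h
    rw [stepDown_succ_cons] at hlen
    simp only [length_append, length_flatten, map_replicate, sum_replicate, length_cons,
      _root_.smul_eq_mul] at hlen
    have := Nat.le_mul_of_pos_right m (Nat.add_one_pos (headW (succ a) T).length)
    omega

lemma lt_of_iterStep_cons_eq_nil (hfs : ∀ k, fs ω k = k) {c : Ordinal} {T : List Ordinal}
    (h1 : 1 ≤ c) (h2 : c < ω * 2) {m k : ℕ} (h : iterStep fs (c :: T) m k = []) : m < k := by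
  rcases zero_or_succ_or_isSuccLimit c with rfl | ⟨a, rfl⟩ | hc
  · simp at h1
  · exact lt_of_iterStep_succ_cons_eq_nil fs h
  cases k with
  | zero =>
    change stepDown fs (c :: T) m = [] at h
    simp [stepDown_limit_cons fs hc] at h
  | succ k =>
    rw [iterStep_succ', stepDown_limit_cons fs hc,
      eq_omega0_of_isSuccLimit_of_lt_omega0_mul_two hc h2, hfs] at h
    cases m with
    | zero => omega
    | succ i =>
      rw [Nat.cast_succ, ← succ_eq_add_one] at h
      have := lt_of_iterStep_succ_cons_eq_nil fs h
      omega

lemma lt_hW (hfs : ∀ k, fs ω k = k) {c : Ordinal} {T : List Ordinal} (h1 : 1 ≤ c)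
    (h2 : c < ω * 2) {m : ℕ} (hd : Dies fs (c :: T) m) : m < hW fs (c :: T) m :=
  lt_of_iterStep_cons_eq_nil fs hfs h1 h2 (iterStep_hW fs hd)

inductive Dominated : List Ordinal → List Ordinal → Prop
  | nil (D : List Ordinal) : Dominated [] D
  | head {c d : Ordinal} (T : List Ordinal) :
      c ≤ d → c = d ∨ d < ω → Dominated (c :: T) (d :: T)
  | cons (β : Ordinal) {C D : List Ordinal} : Dominated C D → Dominated C (β :: D)

namespace Dominated

lemma refl : ∀ C, Dominated C C
  | [] => nil []
  | _ :: T => head T le_rfl (Or.inl rfl)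

lemma append_left {C D : List Ordinal} (h : Dominated C D) : ∀ P, Dominated C (P ++ D)
  | [] => h
  | β :: P => cons β (h.append_left P)

lemma eq_nil {C : List Ordinal} (h : Dominated C []) : C = [] := by
  cases h
  rfl

lemma stepDown_stepDown (hfs : ∀ k, fs ω k = k) {c : Ordinal} (hc : c < ω * 2)
    (T : List Ordinal) {t t' : ℕ} (ht : t ≤ t') :
    Dominated (stepDown fs (c :: T) t) (stepDown fs (c :: T) t') := by
  rcases zero_or_succ_or_isSuccLimit c with rfl | ⟨a, rfl⟩ | hl
  · simpa using refl T
  · obtain ⟨r, rfl⟩ := Nat.exists_eq_add_of_le' ht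
    rw [stepDown_succ_cons, stepDown_succ_cons, replicate_add, flatten_append, append_assoc]
    exact (refl _).append_left _
  · rw [stepDown_limit_cons fs hl, stepDown_limit_cons fs hl,
      eq_omega0_of_isSuccLimit_of_lt_omega0_mul_two hl hc, hfs, hfs]
    exact head T (Nat.cast_le.2 ht) (Or.inr (natCast_lt_omega0 t'))

/-- A finite dominating modality `d > c` steps down to `d - 1 ≥ c`, and modalities in front of
`d :: T` leave that suffix intact. -/
lemma cons_stepDown {c : Ordinal} {T D : List Ordinal} (h : Dominated (c :: T) D)
    (hne : D ≠ c :: T) (k : ℕ) : Dominated (c :: T) (stepDown fs D k) := by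
  cases h with
  | head _ hcd hfin =>
    rename_i d
    have hlt : c < d := lt_of_le_of_ne hcd fun h => hne (h ▸ rfl)
    obtain ⟨n, rfl⟩ := lt_omega0.1 (hfin.resolve_left hlt.ne)
    obtain ⟨i, rfl⟩ := Nat.exists_eq_succ_of_ne_zero (by rintro rfl; simp at hlt : n ≠ 0)
    rw [Nat.cast_succ, ← succ_eq_add_one] at hlt ⊢
    rw [stepDown_succ_cons]
    exact (head T (lt_succ_iff.1 hlt) (Or.inr (natCast_lt_omega0 i))).append_left _
  | cons β h =>
    rcases zero_or_succ_or_isSuccLimit β with rfl | ⟨a, rfl⟩ | hβ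
    · simpa using h
    · rw [stepDown_succ_cons]
      exact (h.cons a).append_left _
    · rw [stepDown_limit_cons fs hβ]
      exact h.cons _

lemma stepDown_or (hfs : ∀ k, fs ω k = k) {C D : List Ordinal} (h : Dominated C D)
    (hD : ∀ γ ∈ D, γ < ω * 2) {t t' : ℕ} (ht : t ≤ t') :
    Dominated (stepDown fs C t) (stepDown fs D t') ∨ Dominated C (stepDown fs D t') := by
  rcases C with _ | ⟨c, T⟩
  · exact Or.inl (nil _)
  by_cases hDC : D = c :: T
  · subst hDC
    exact Or.inl (stepDown_stepDown fs hfs (hD c mem_cons_self) T ht)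
  · exact Or.inr (h.cons_stepDown fs hDC t')

lemma iterStep_eq_nil (hfs : ∀ k, fs ω k = k) :
    ∀ k {C D : List Ordinal} {t t' : ℕ}, Dominated C D → (∀ γ ∈ D, γ < ω * 2) →
      t ≤ t' → iterStep fs D t' k = [] → iterStep fs C t k = []
  | 0, C, D, t, t', h, hD, ht, hk => by
    change stepDown fs D t' = [] at hk
    rcases h.stepDown_or fs hfs hD ht with h' | h' <;> rw [hk] at h'
    · exact h'.eq_nil
    · rw [h'.eq_nil]
      rfl
  | k + 1, C, D, t, t', h, hD, ht, hk => by
    rw [iterStep_succ'] at hk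
    have hD' := fun γ (hγ : γ ∈ stepDown fs D t') =>
      lt_omega0_mul_two_of_mem_stepDown fs hfs hD hγ
    rcases h.stepDown_or fs hfs hD ht with h' | h'
    · rw [iterStep_succ']
      exact iterStep_eq_nil hfs k h' hD' (by omega) hk
    · exact iterStep_eq_nil_of_le fs (iterStep_eq_nil hfs k h' hD' (by omega) hk) k.le_succ

end Dominated

lemma hW_le_hW_of_le (hfs : ∀ k, fs ω k = k) {A : List Ordinal} (hA : ∀ γ ∈ A, γ < ω * 2)
    {m m' : ℕ} (hd : Dies fs A m') (h : m ≤ m') : hW fs A m ≤ hW fs A m' :=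
  ((iterStep_eq_nil_iff fs).1
    ((Dominated.refl A).iterStep_eq_nil fs hfs _ hA h (iterStep_hW fs hd))).2

lemma iterStep_append_zero_cons {W : List Ordinal} (hWne : W ≠ []) (V : List Ordinal) (m : ℕ) :
    ∀ k, (∀ i < k, iterStep fs W m i ≠ []) →
      iterStep fs (W ++ 0 :: V) m k = iterStep fs W m k ++ 0 :: V
  | 0, _ => stepDown_append_zero_cons fs hWne V m
  | k + 1, h => by
    change stepDown fs (iterStep fs (W ++ 0 :: V) m k) (m + k + 1) = _
    rw [iterStep_append_zero_cons hWne V m k fun i hi => h i (by omega)]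
    exact stepDown_append_zero_cons fs (h k k.lt_succ_self) V _

lemma dies_of_dies_append_zero_cons {W V : List Ordinal} {m : ℕ} (hWne : W ≠ [])
    (hd : Dies fs (W ++ 0 :: V) m) : Dies fs W m := by
  by_contra hW'
  obtain ⟨k, hk⟩ := hd
  rw [iterStep_append_zero_cons fs hWne V m k fun i _ hi => hW' ⟨i, hi⟩] at hk
  simp at hk

lemma iterStep_hW_add_one_append_zero_cons {W : List Ordinal} (hWne : W ≠ []) (V : List Ordinal)
    {m : ℕ} (hd : Dies fs W m) : iterStep fs (W ++ 0 :: V) m (hW fs W m + 1) = V := by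
  change stepDown fs (iterStep fs (W ++ 0 :: V) m (hW fs W m)) _ = V
  rw [iterStep_append_zero_cons fs hWne V m _ fun i => iterStep_ne_nil_of_lt_hW fs,
    iterStep_hW fs hd, nil_append, stepDown_zero_cons]

lemma dies_and_hW_append_zero_cons {W V : List Ordinal} {m : ℕ} (hWne : W ≠ [])
    (hVne : V ≠ []) (hd : Dies fs (W ++ 0 :: V) m) :
    Dies fs V (m + hW fs W m + 2) ∧
      hW fs (W ++ 0 :: V) m = hW fs W m + 2 + hW fs V (m + hW fs W m + 2) := by
  have hstep := iterStep_hW_add_one_append_zero_cons fs hWne V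
    (dies_of_dies_append_zero_cons fs hWne hd)
  obtain ⟨hdV, hsum⟩ := dies_and_hW_eq_of_iterStep_eq fs hd hstep hVne
  rw [show m + (hW fs W m + 1) + 1 = m + hW fs W m + 2 by omega] at hdV hsum
  exact ⟨hdV, by omega⟩

lemma iterate_hW_le_hW_append (hfs : ∀ k, fs ω k = k) {A : List Ordinal}
    (hA : ∀ γ ∈ A, 1 ≤ γ ∧ γ < ω * 2) (hne : A ≠ []) :
    ∀ j {m x : ℕ}, x ≤ m → Dies fs (A ++ (replicate j (0 :: A)).flatten) m →
      (hW fs A)^[j] x ≤ hW fs (A ++ (replicate j (0 :: A)).flatten) m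
  | 0, m, x, hx, hd => by
    obtain ⟨c, T, rfl⟩ := exists_cons_of_ne_nil hne
    simp only [replicate_zero, flatten_nil, append_nil] at hd ⊢
    have := lt_hW fs hfs (hA c mem_cons_self).1 (hA c mem_cons_self).2 hd
    simp only [Function.iterate_zero, id_eq]
    omega
  | j + 1, m, x, hx, hd => by
    have hsplit : A ++ (replicate (j + 1) (0 :: A)).flatten
        = A ++ 0 :: (A ++ (replicate j (0 :: A)).flatten) := by
      simp [replicate_succ]
    rw [hsplit] at hd ⊢
    obtain ⟨hdV, hsum⟩ := dies_and_hW_append_zero_cons fs hne (by simp [hne]) hd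
    have hmono := hW_le_hW_of_le fs hfs (fun γ hγ => (hA γ hγ).2)
      (dies_of_dies_append_zero_cons fs hne hd) hx
    have ih := iterate_hW_le_hW_append hfs hA hne j (x := hW fs A x) (by omega) hdV
    rw [Function.iterate_succ_apply]
    omega

end Worm

/-- If `A ∈ 𝕎₁^{ω·2}` is a worm all of whose modalities are
`≥ 1` and `h_{⟨1⟩A}(n)` is defined, then `h_{⟨1⟩A}(n) > h_A^{(n)}(n)`, the
`n`-fold iterate of `h_A` applied to `n`. -/
theorem hW_one_cons_gt_iterate (fs : Ordinal → ℕ → Ordinal)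
    (hfs : ∀ k, fs Ordinal.omega0 k = (k : Ordinal))
    (A : List Ordinal) (hA : ∀ γ ∈ A, 1 ≤ γ ∧ γ < Ordinal.omega0 * 2)
    (n : ℕ) (h : Dies fs ((1 : Ordinal) :: A) n) :
    (fun x => hW fs A x)^[n] n < hW fs ((1 : Ordinal) :: A) n := by
  rcases eq_or_ne A [] with rfl | hne
  · have hn := Worm.lt_hW fs hfs le_rfl
      (Ordinal.one_lt_omega0.trans Worm.omega0_lt_omega0_mul_two) h
    cases n with
    | zero => exact hn
    | succ n =>
      rw [Function.iterate_succ_apply', Worm.hW_nil]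
      exact (Nat.zero_le _).trans_lt hn
  obtain ⟨hdV, hsum⟩ := Worm.dies_and_hW_eq_of_iterStep_eq fs h
    (Worm.iterStep_one_cons_one fs (fun γ hγ => (hA γ hγ).1) n) (by simp [hne])
  have hle := Worm.iterate_hW_le_hW_append fs hfs hA hne n (x := n) (by omega) hdV
  exact hle.trans_lt (by omega)
end

section
/- If h_{⟨1⟩⟨1⟩⟨1⟩⟨1⟩}(n) is defined then h_{⟨1⟩⟨1⟩⟨1⟩⟨1⟩}(n) > 2^n_n (the n-fold iterated exponential of n), and h_{⟨1⟩⟨1⟩⟨1⟩}(n) > 2^n. -/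
def superexp (x : ℕ) : ℕ → ℕ
  | 0 => x
  | n + 1 => 2 ^ superexp x n

/-!
Appending `⟨0⟩D` to a nonempty worm `A` does not interfere with the descent of `A`: the `⟨0⟩`
shields `D`, so `A⟨0⟩D` first runs down `A`, then drops the `⟨0⟩`, then runs down `D`. With
`F_A(m) = m + h_A(m) + 2` this reads `F_{A⟨0⟩D} = F_D ∘ F_A`, and since `⟨1⟩A⟦m⟧ = ⟨0⟩A(⟨0⟩A)^m`
when `A` consists of `1`s, `F_{⟨1⟩A}(m) = F_A^{m+1}(m+2)`. From `F_{⟨1⟩}(m) = 2m + 3` one gets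
`F_{⟨1⟩⟨1⟩}(x) > 2^x + x + 2`, a bound inherited by every further level, and iterating a function
with this bound produces the tower `2^x_k`. Only `0`s and `1`s occur in the worms involved, so the
fundamental sequences never enter and all these values of `h` are defined.
-/

lemma Ordinal.pred_one : Ordinal.pred 1 = 0 := by
  simpa using Ordinal.pred_add_one 0

lemma Ordinal.not_isSuccLimit_one : ¬ Order.IsSuccLimit (1 : Ordinal) := by
  simpa using Order.not_isSuccLimit_succ (0 : Ordinal)

lemma headW_append_zero {α : Ordinal} (hα : α ≠ 0) (B D : List Ordinal) :
    headW α (B ++ 0 :: D) = headW α B := by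
  induction B with
  | nil => simp [headW, pos_iff_ne_zero.2 hα]
  | cons β B ih => simp [headW, ih]

lemma remW_append_zero {α : Ordinal} (hα : α ≠ 0) (B D : List Ordinal) :
    remW α (B ++ 0 :: D) = remW α B ++ 0 :: D := by
  induction B with
  | nil => simp [remW, pos_iff_ne_zero.2 hα]
  | cons β B ih => by_cases hβ : β < α <;> simp [remW, hβ, ih]

lemma headW_replicate_self (α : Ordinal) (a : ℕ) :
    headW α (List.replicate a α) = List.replicate a α := by
  induction a with
  | zero => rfl
  | succ a ih => simp [List.replicate_succ, headW, ih]

lemma remW_replicate_self (α : Ordinal) (a : ℕ) : remW α (List.replicate a α) = [] := by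
  induction a with
  | zero => rfl
  | succ a ih => simp [List.replicate_succ, remW, ih]

section Descent

variable {fs : Ordinal → ℕ → Ordinal}

lemma stepDown_zero_cons (B : List Ordinal) (k : ℕ) : stepDown fs (0 :: B) k = B := by
  simp [stepDown]

lemma stepDown_append_zero {A : List Ordinal} (hA : A ≠ []) (D : List Ordinal) (k : ℕ) :
    stepDown fs (A ++ 0 :: D) k = stepDown fs A k ++ 0 :: D := by
  obtain ⟨α, B, rfl⟩ := List.exists_cons_of_ne_nil hA
  by_cases hα : α = 0
  · simp [stepDown, hα]
  · by_cases hlim : Order.IsSuccLimit α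
    · simp [stepDown, hα, hlim]
    · simp [stepDown, hα, hlim, headW_append_zero hα, remW_append_zero hα]

lemma iterStep_succ (A : List Ordinal) (m k : ℕ) :
    iterStep fs A m (k + 1) = iterStep fs (stepDown fs A m) (m + 1) k := by
  induction k with
  | zero => rfl
  | succ k ih =>
    rw [iterStep, ih, iterStep, show m + (k + 1) + 1 = m + 1 + k + 1 by omega]

/-- `h_A(m)` is defined and equals `k`. -/
def DiesAt (fs : Ordinal → ℕ → Ordinal) (A : List Ordinal) (m k : ℕ) : Prop :=
  IsLeast {j | iterStep fs A m j = []} k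

lemma DiesAt.hW_eq {A : List Ordinal} {m k : ℕ} (h : DiesAt fs A m k) : hW fs A m = k :=
  h.csInf_eq

lemma diesAt_zero_iff {A : List Ordinal} {m : ℕ} : DiesAt fs A m 0 ↔ stepDown fs A m = [] :=
  ⟨fun h => h.1, fun h => ⟨h, fun j _ => Nat.zero_le j⟩⟩

lemma diesAt_succ_iff {A : List Ordinal} {m k : ℕ} :
    DiesAt fs A m (k + 1) ↔
      stepDown fs A m ≠ [] ∧ DiesAt fs (stepDown fs A m) (m + 1) k := by
  simp only [DiesAt, IsLeast, lowerBounds, Set.mem_ofPred_eq, iterStep_succ]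
  constructor
  · rintro ⟨hk, hmin⟩
    refine ⟨fun hnil => by simpa using hmin (show iterStep fs A m 0 = [] from hnil), hk,
      fun j hj => ?_⟩
    exact Nat.le_of_succ_le_succ (hmin (by rwa [iterStep_succ]))
  · rintro ⟨hne, hk, hmin⟩
    refine ⟨hk, fun j hj => ?_⟩
    cases j with
    | zero => exact absurd hj hne
    | succ j => exact Nat.succ_le_succ (hmin (by rwa [iterStep_succ] at hj))

lemma DiesAt.zero_cons {D : List Ordinal} {m d : ℕ} (hD : D ≠ []) (h : DiesAt fs D (m + 1) d) :
    DiesAt fs (0 :: D) m (d + 1) :=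
  diesAt_succ_iff.2 ⟨by rwa [stepDown_zero_cons], by rwa [stepDown_zero_cons]⟩

lemma DiesAt.append_zero {A D : List Ordinal} {m a d : ℕ} (hA : A ≠ []) (h : DiesAt fs A m a)
    (h' : DiesAt fs (0 :: D) (m + a + 1) d) : DiesAt fs (A ++ 0 :: D) m (a + 1 + d) := by
  induction a generalizing A m with
  | zero =>
    have hstep : stepDown fs (A ++ 0 :: D) m = 0 :: D := by
      rw [stepDown_append_zero hA, diesAt_zero_iff.1 h, List.nil_append]
    rw [show 0 + 1 + d = d + 1 by omega]
    exact diesAt_succ_iff.2 ⟨by simp [hstep], by rwa [hstep]⟩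
  | succ a ih =>
    obtain ⟨hne, hstep⟩ := diesAt_succ_iff.1 h
    have := ih hne hstep (by rwa [show m + 1 + a + 1 = m + (a + 1) + 1 by omega])
    rw [show a + 1 + 1 + d = a + 1 + d + 1 by omega]
    exact diesAt_succ_iff.2 ⟨by simp [stepDown_append_zero hA], by rwa [stepDown_append_zero hA]⟩

def wormRepeat (W : List Ordinal) : ℕ → List Ordinal
  | 0 => W
  | i + 1 => W ++ 0 :: wormRepeat W i

lemma wormRepeat_ne_nil {W : List Ordinal} (hW : W ≠ []) (i : ℕ) : wormRepeat W i ≠ [] := by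
  cases i <;> simp [wormRepeat, hW]

lemma wormRepeat_nil (i : ℕ) : wormRepeat [] i = List.replicate i 0 := by
  induction i with
  | zero => rfl
  | succ i ih => simp [wormRepeat, ih, List.replicate_succ]

lemma flatten_replicate_zero_cons (W : List Ordinal) (i : ℕ) :
    (List.replicate (i + 1) (0 :: W)).flatten = 0 :: wormRepeat W i := by
  induction i with
  | zero => simp [wormRepeat]
  | succ i ih => rw [List.replicate_succ, List.flatten_cons, ih]; rfl

lemma stepDown_one_cons_replicate (a m : ℕ) :
    stepDown fs (1 :: List.replicate a 1) m = 0 :: wormRepeat (List.replicate a 1) m := by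
  simp [stepDown, Ordinal.not_isSuccLimit_one, Ordinal.pred_one, headW_replicate_self,
    remW_replicate_self, flatten_replicate_zero_cons]

lemma diesAt_replicate_zero (m k : ℕ) : DiesAt fs (List.replicate (k + 1) 0) m k := by
  induction k generalizing m with
  | zero => exact diesAt_zero_iff.2 (stepDown_zero_cons [] m)
  | succ k ih => exact (ih (m + 1)).zero_cons (by simp)

lemma diesAt_wormRepeat {W : List Ordinal} {f : ℕ → ℕ} (hW : W ≠ [])
    (h : ∀ m, ∃ k, DiesAt fs W m k ∧ m + k + 2 = f m) (i m : ℕ) :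
    ∃ k, DiesAt fs (wormRepeat W i) m k ∧ m + k + 2 = f^[i + 1] m := by
  induction i generalizing m with
  | zero => simpa [wormRepeat] using h m
  | succ i ih =>
    obtain ⟨a, ha, ha_eq⟩ := h m
    obtain ⟨d, hd, hd_eq⟩ := ih (m + a + 2)
    refine ⟨a + 1 + (d + 1), ha.append_zero hW (hd.zero_cons (wormRepeat_ne_nil hW i)), ?_⟩
    rw [Function.iterate_succ_apply, ← ha_eq, ← hd_eq]
    omega

end Descent

/-- `hardyOnes a m = m + h_{⟨1⟩^{a+1}}(m) + 2` -/
def hardyOnes : ℕ → ℕ → ℕ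
  | 0, m => 2 * m + 3
  | a + 1, m => (hardyOnes a)^[m + 1] (m + 2)

lemma diesAt_replicate_one (fs : Ordinal → ℕ → Ordinal) (a m : ℕ) :
    ∃ k, DiesAt fs (List.replicate (a + 1) 1) m k ∧ m + k + 2 = hardyOnes a m := by
  induction a generalizing m with
  | zero =>
    refine ⟨m + 1, diesAt_succ_iff.2 ⟨?_, ?_⟩, by simp [hardyOnes]; omega⟩
    all_goals rw [List.replicate_succ, stepDown_one_cons_replicate, List.replicate_zero,
      wormRepeat_nil]
    · simp
    · exact diesAt_replicate_zero (m + 1) m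
  | succ a ih =>
    have hW : List.replicate (a + 1) (1 : Ordinal) ≠ [] := by simp
    obtain ⟨k, hk, hk_eq⟩ := diesAt_wormRepeat hW ih m (m + 2)
    refine ⟨k + 2, diesAt_succ_iff.2 ⟨?_, ?_⟩, by rw [hardyOnes, ← hk_eq]; omega⟩
    all_goals rw [List.replicate_succ, stepDown_one_cons_replicate]
    · simp
    · exact hk.zero_cons (wormRepeat_ne_nil hW m)

lemma iterate_hardyOnes_zero_add_three (k y : ℕ) : (hardyOnes 0)^[k] y + 3 = 2 ^ k * (y + 3) := by
  induction k with
  | zero => simp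
  | succ k ih => rw [Function.iterate_succ_apply', hardyOnes, pow_succ]; linarith

lemma two_pow_add_lt_iterate {f : ℕ → ℕ} (hf : ∀ x, 2 ^ x + x + 2 < f x) (k x : ℕ) :
    2 ^ x + x + 2 < f^[k + 1] x := by
  induction k with
  | zero => exact hf x
  | succ k ih =>
    rw [Function.iterate_succ_apply']
    linarith [hf (f^[k + 1] x), Nat.zero_le (2 ^ f^[k + 1] x)]

lemma two_pow_add_lt_hardyOnes (a x : ℕ) : 2 ^ x + x + 2 < hardyOnes (a + 1) x := by
  induction a generalizing x with
  | zero =>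
    have h := iterate_hardyOnes_zero_add_three (x + 1) (x + 2)
    have hx : x < 2 ^ x := Nat.lt_two_pow_self
    rw [pow_succ] at h
    rw [hardyOnes]
    nlinarith
  | succ a ih =>
    have h := two_pow_add_lt_iterate ih x (x + 2)
    have : 2 ^ x ≤ 2 ^ (x + 2) := Nat.pow_le_pow_right two_pos (by omega)
    rw [hardyOnes]
    omega

lemma superexp_add_lt_iterate {f : ℕ → ℕ} (hf : ∀ x, 2 ^ x + x + 2 < f x) (k : ℕ) {x y : ℕ}
    (hxy : x ≤ y) : superexp x k + y + 2 < f^[k + 1] y := by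
  induction k with
  | zero =>
    have hy : y < 2 ^ y := Nat.lt_two_pow_self
    have := hf y
    simp only [superexp, zero_add, Function.iterate_one]
    omega
  | succ k ih =>
    rw [Function.iterate_succ_apply']
    have := hf (f^[k + 1] y)
    have : 2 ^ superexp x k ≤ 2 ^ f^[k + 1] y := Nat.pow_le_pow_right two_pos (by omega)
    simp only [superexp]
    omega

theorem hW_worm_1111_superexp_general (fs : Ordinal → ℕ → Ordinal)
    (n : ℕ) :
    superexp n n < hW fs [(1 : Ordinal), 1, 1, 1] n ∧
    2 ^ n < hW fs [(1 : Ordinal), 1, 1] n := by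
  obtain ⟨k₃, h₃, e₃⟩ := diesAt_replicate_one fs 2 n
  obtain ⟨k₄, h₄, e₄⟩ := diesAt_replicate_one fs 3 n
  have b₃ : 2 ^ n + n + 2 < hardyOnes 2 n := two_pow_add_lt_hardyOnes 1 n
  have b₄ : superexp n n + (n + 2) + 2 < hardyOnes 3 n :=
    superexp_add_lt_iterate (two_pow_add_lt_hardyOnes 1) n (by omega)
  rw [show [(1 : Ordinal), 1, 1, 1] = List.replicate 4 1 from rfl, h₄.hW_eq,
    show [(1 : Ordinal), 1, 1] = List.replicate 3 1 from rfl, h₃.hW_eq]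
  omega

/-- If `h_{⟨1⟩⟨1⟩⟨1⟩⟨1⟩}(n)` is defined then
`h_{⟨1⟩⟨1⟩⟨1⟩⟨1⟩}(n) > 2^n_n` (the `n`-fold iterated exponential of `n`) and
`h_{⟨1⟩⟨1⟩⟨1⟩}(n) > 2^n`. -/
theorem hW_worm_1111_superexp (fs : Ordinal → ℕ → Ordinal)
    (hfs : ∀ k, fs Ordinal.omega0 k = (k : Ordinal))
    (n : ℕ) (h : Dies fs [(1 : Ordinal), 1, 1, 1] n) :
    superexp n n < hW fs [(1 : Ordinal), 1, 1, 1] n ∧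
    2 ^ n < hW fs [(1 : Ordinal), 1, 1] n :=
  hW_worm_1111_superexp_general fs n
end
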